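/- Let g : ℝ³ → ℝ be a polynomial with Δg = 0, written (on the ball) as a finite sum of harmonic homogeneous polynomials. Define u(x) = (2x·∇g(x) + g(x))·x − |x|²·∇g(x). Then u is a harmonic vector field: Δu = 0 componentwise. -/

import Mathlib

/-!
Write `Δ` for the Laplacian and `E = ∑ xₖ ∂ₖ` for the Euler operator on `n` variables. The Leibniz
rule gives `Δ (E g) = 2 Δg + E Δg`, `Δ (f xᵢ) = (Δf) xᵢ + 2 ∂ᵢf` and
`Δ (|x|² h) = 2n h + 4 E h + |x|² Δh`. For harmonic `g` and `f = 2 E g + (n - 2) g` the polynomial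
`f` is harmonic, and since `∂ᵢ (E g) = ∂ᵢg + E ∂ᵢg` with `∂ᵢg` harmonic, both `Δ (f xᵢ)` and
`Δ (|x|² ∂ᵢg)` equal `4 E ∂ᵢg + 2n ∂ᵢg`. For `n = 3` the coefficient `n - 2` is `1`.
-/

open MvPolynomial

namespace MvPolynomial

variable {σ R : Type*} [CommRing R]

theorem pderiv_pderiv_comm (i j : σ) (p : MvPolynomial σ R) :
    pderiv i (pderiv j p) = pderiv j (pderiv i p) := by
  classical
  have hcomm : ⁅pderiv i, pderiv j⁆ = (0 : Derivation R (MvPolynomial σ R) (MvPolynomial σ R)) :=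
    derivation_ext fun k => by
      rw [Derivation.commutator_apply]
      simp [pderiv_X, Pi.single_apply, apply_ite]
  have hp := congr($hcomm p)
  rw [Derivation.commutator_apply] at hp
  simpa [sub_eq_zero] using hp

variable [Fintype σ]

noncomputable def laplacian : MvPolynomial σ R →ₗ[R] MvPolynomial σ R :=
  ∑ i, (pderiv i).toLinearMap ∘ₗ (pderiv i).toLinearMap

noncomputable def euler (p : MvPolynomial σ R) : MvPolynomial σ R :=
  ∑ k, X k * pderiv k p

theorem laplacian_apply (p : MvPolynomial σ R) : laplacian p = ∑ i, pderiv i (pderiv i p) := by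
  simp [laplacian]

theorem laplacian_X (i : σ) : laplacian (X i : MvPolynomial σ R) = 0 := by
  classical
  simp [laplacian_apply, pderiv_X, Pi.single_apply, apply_ite]

theorem pderiv_laplacian (i : σ) (p : MvPolynomial σ R) :
    pderiv i (laplacian p) = laplacian (pderiv i p) := by
  simp only [laplacian_apply, map_sum, pderiv_pderiv_comm i]

theorem laplacian_mul (p q : MvPolynomial σ R) :
    laplacian (p * q) =
      laplacian p * q + 2 * ∑ i, pderiv i p * pderiv i q + p * laplacian q := by
  simp only [laplacian_apply, pderiv_mul, map_add, Finset.mul_sum, Finset.sum_mul,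
    ← Finset.sum_add_distrib]
  exact Finset.sum_congr rfl fun i _ => by ring

theorem laplacian_mul_X (p : MvPolynomial σ R) (i : σ) :
    laplacian (p * X i) = laplacian p * X i + 2 * pderiv i p := by
  classical
  simp [laplacian_mul, laplacian_X, pderiv_X, Pi.single_apply]

theorem pderiv_euler (i : σ) (p : MvPolynomial σ R) :
    pderiv i (euler p) = pderiv i p + euler (pderiv i p) := by
  classical
  simp [euler, Finset.sum_add_distrib, pderiv_X, Pi.single_apply, pderiv_pderiv_comm i, add_comm]

theorem laplacian_euler (p : MvPolynomial σ R) :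
    laplacian (euler p) = 2 * laplacian p + euler (laplacian p) := by
  classical
  simp [euler, laplacian_mul, laplacian_X, pderiv_X, Pi.single_apply, ← pderiv_laplacian,
    Finset.sum_add_distrib, laplacian_apply p, Finset.mul_sum]

theorem pderiv_sum_X_sq (i : σ) : pderiv i (∑ k, X k ^ 2 : MvPolynomial σ R) = 2 * X i := by
  classical
  simp [pderiv_X, Pi.single_apply, mul_comm]

theorem laplacian_sum_X_sq : laplacian (∑ k, X k ^ 2 : MvPolynomial σ R) = 2 * Fintype.card σ := by
  simp only [laplacian_apply, pderiv_sum_X_sq, two_mul, map_add, pderiv_X_self]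
  simp

theorem laplacian_sum_X_sq_mul (p : MvPolynomial σ R) :
    laplacian ((∑ k, X k ^ 2) * p) =
      2 * (Fintype.card σ : MvPolynomial σ R) * p + 4 * euler p + (∑ k, X k ^ 2) * laplacian p := by
  simp only [laplacian_mul, laplacian_sum_X_sq, pderiv_sum_X_sq, euler, Finset.mul_sum]
  ring_nf

theorem laplacian_euler_mul_X_sub_sum_X_sq_mul_pderiv_eq_zero {g : MvPolynomial σ R}
    (hg : laplacian g = 0) (i : σ) :
    laplacian ((2 * euler g + C ((Fintype.card σ : R) - 2) * g) * X i
      - (∑ k, X k ^ 2) * pderiv i g) = 0 := by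
  set c : R := (Fintype.card σ : R) - 2
  have hf : laplacian (2 * euler g + C c * g) = 0 := by
    rw [two_mul, C_mul', map_add, map_add, map_smul, laplacian_euler, hg]
    simp [euler]
  have hdf : pderiv i (2 * euler g + C c * g) =
      2 * (pderiv i g + euler (pderiv i g)) + C c * pderiv i g := by
    rw [two_mul, two_mul, map_add, map_add, pderiv_C_mul, pderiv_euler]
  have hdg : laplacian (pderiv i g) = 0 := by
    rw [← pderiv_laplacian, hg, map_zero]
  have hc : C c = (Fintype.card σ : MvPolynomial σ R) - 2 := by
    rw [map_sub, map_natCast, map_ofNat]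
  rw [map_sub, laplacian_mul_X, laplacian_sum_X_sq_mul, hf, hdf, hdg, hc]
  ring

end MvPolynomial

/-- For a harmonic polynomial `g` on `ℝ³`, each component of
`u(x) = (2x·∇g(x) + g(x))·x − |x|²·∇g(x)` is a harmonic polynomial. -/
theorem stmt16 (g : MvPolynomial (Fin 3) ℝ)
    (hg : ∑ i : Fin 3, pderiv i (pderiv i g) = 0) :
    ∀ i : Fin 3,
      ∑ j : Fin 3, pderiv j (pderiv j
        ((2 * (∑ k : Fin 3, X k * pderiv k g) + g) * X i
          - (∑ k : Fin 3, X k ^ 2) * pderiv i g)) = 0 := by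
  intro i
  have h := laplacian_euler_mul_X_sub_sum_X_sq_mul_pderiv_eq_zero
    (by rwa [laplacian_apply] : laplacian g = 0) i
  have hC : (C ((Fintype.card (Fin 3) : ℝ) - 2) : MvPolynomial (Fin 3) ℝ) = 1 := by norm_num
  rwa [hC, one_mul, laplacian_apply, euler] at h
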